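/- If b ≤ ω₁, then the product S_ω × S_{ω₁} of the sequential fans is not a k_R-space. -/

import Mathlib

open Set Filter Topology Cardinal

/-- A `k`-space: a set is closed whenever its trace on every compact subset is closed. -/
def IsKSpace (X : Type*) [TopologicalSpace X] : Prop :=
  ∀ C : Set X, (∀ K : Set X, IsCompact K → IsClosed (Subtype.val ⁻¹' C : Set K)) → IsClosed C

/-- A `k_R`-space: every real-valued function which is continuous on each
compact subset is continuous. -/
def IsKRSpace (X : Type*) [TopologicalSpace X] : Prop :=
  ∀ f : X → ℝ, (∀ K : Set X, IsCompact K → ContinuousOn f K) → Continuous f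
/-- The sequential fan with spokes indexed by `κ`: underlying set is
`Option (κ × ℕ)`, with `none` the apex and `some (α, n)` the `n`-th point
of the `α`-th spoke. -/
def Fan (κ : Type*) : Type _ := Option (κ × ℕ)

/-- The quotient topology on the fan: each point `some (α, n)` is isolated and
a set containing the apex is open iff it contains a tail of every spoke. -/
instance Fan.instTopologicalSpace (κ : Type*) : TopologicalSpace (Fan κ) where
  IsOpen s := (none : Option (κ × ℕ)) ∈ s → ∀ α : κ, {n : ℕ | (some (α, n) : Option (κ × ℕ)) ∉ s}.Finite
  isOpen_univ := by intro _ α; exact Set.finite_empty.subset (fun n hn => hn (Set.mem_univ _))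
  isOpen_inter := by
    intro s t hs ht hmem α
    refine ((hs hmem.1 α).union (ht hmem.2 α)).subset ?_
    intro n hn
    by_contra h
    simp only [Set.mem_union, Set.mem_setOf_eq] at h
    push_neg at h
    exact hn ⟨h.1, h.2⟩
  isOpen_sUnion := by
    intro S hS hmem α
    obtain ⟨s, hsS, hs⟩ := hmem
    refine (hS s hsS hs α).subset ?_
    intro n hn hns
    exact hn (Set.mem_sUnion.2 ⟨s, hsS, hns⟩)

/-- The apex of the sequential fan. -/
def Fan.apex {κ : Type*} : Fan κ := (none : Option (κ × ℕ))

/-- The `n`-th point of the `α`-th spoke of the sequential fan. -/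
def Fan.pt {κ : Type*} (α : κ) (n : ℕ) : Fan κ := (some (α, n) : Option (κ × ℕ))
/-- The bounding number `𝔟`: the least cardinality of a family in `ℕ → ℕ` which is
unbounded with respect to eventual domination. -/
noncomputable def boundingNumber : Cardinal :=
  sInf {c : Cardinal | ∃ F : Set (ℕ → ℕ), #↥F = c ∧
    ¬ ∃ g : ℕ → ℕ, ∀ f ∈ F, ∀ᶠ n in Filter.atTop, f n ≤ g n}

/-!
Since `𝔟 ≤ ω₁ = #ι`, there is a family `f : ι → ℕ → ℕ` which no single `g : ℕ → ℕ`
eventually dominates. Put `D = {(pt m (f α m), pt α m)}`. A compact subset of a fan meets only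
finitely many spokes, so `D` meets every compact subset of `S_ω × S_{ω₁}` in a finite set; as `D`
consists of isolated points, it is clopen in every compact subset, so its indicator is continuous
on compacta and, in a `k_R`-space, continuous: `D` would be clopen. But `D` accumulates at the double apex: a neighbourhood `U × V` of it contains
the points of spoke `m` beyond some `φ m` in `U`, and an `f α` exceeding `φ` infinitely often
produces points of `D` in `U × V`.
-/

theorem IsKRSpace.isClopen_of_forall_isCompact {X : Type*} [TopologicalSpace X]
    (hX : IsKRSpace X) {D : Set X}
    (hD : ∀ K : Set X, IsCompact K → IsClopen ((↑) ⁻¹' D : Set K)) : IsClopen D := by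
  set g : Bool → ℝ := fun b => b.toNat
  have hg : Function.Injective g := fun a b h => by cases a <;> cases b <;> simp_all [g]
  have hf : Continuous (g ∘ D.boolIndicator) := hX _ fun K hK =>
    continuous_of_discreteTopology.comp_continuousOn
      ((continuousOn_boolIndicator_iff_isClopen K D).2 (hD K hK))
  have hclosed (b : Bool) : IsClosed (D.boolIndicator ⁻¹' {b}) := by
    have := (isClosed_singleton (x := g b)).preimage hf
    rwa [Set.preimage_comp, ← Set.image_singleton, hg.preimage_image] at this
  refine ⟨?_, isClosed_compl_iff.1 ?_⟩
  · simpa only [Set.preimage_boolIndicator_true] using hclosed true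
  · simpa only [Set.preimage_boolIndicator_false] using hclosed false

namespace Fan

variable {κ : Type*}

theorem isOpen_iff {s : Set (Fan κ)} :
    IsOpen s ↔ (apex ∈ s → ∀ α : κ, {n | pt α n ∉ s}.Finite) := Iff.rfl

theorem pt_inj {α β : κ} {n m : ℕ} : pt α n = pt β m ↔ α = β ∧ n = m :=
  Option.some_inj.trans Prod.mk_inj

theorem pt_ne_apex (α : κ) (n : ℕ) : pt α n ≠ apex := Option.some_ne_none _

theorem isOpen_of_apex_notMem {s : Set (Fan κ)} (h : apex ∉ s) : IsOpen s :=
  fun h' => absurd h' h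

theorem isClosed_of_finite_spokes {s : Set (Fan κ)}
    (hs : ∀ α : κ, {n | pt α n ∈ s}.Finite) : IsClosed s :=
  isOpen_compl_iff.1 <| isOpen_iff.2 fun _ α => by simpa using hs α

instance : T1Space (Fan κ) :=
  ⟨fun x => isClosed_of_finite_spokes fun α => Set.Subsingleton.finite
    fun n (hn : pt α n = x) m (hm : pt α m = x) => (pt_inj.1 (hn.trans hm.symm)).2⟩

theorem tendsto_pt_apex (α : κ) : Tendsto (pt α) atTop (𝓝 apex) := by
  rw [← Nat.cofinite_eq_atTop]
  intro U hU
  obtain ⟨V, hVU, hV, hapex⟩ := mem_nhds_iff.1 hU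
  exact mem_of_superset (hV hapex α).compl_mem_cofinite fun n hn => hVU (not_not.1 hn)

theorem isDiscrete_of_apex_notMem {s : Set (Fan κ)} (h : apex ∉ s) : IsDiscrete s :=
  isDiscrete_iff_forall_subset_exists_isOpen.2 fun t ht =>
    ⟨t, isOpen_of_apex_notMem fun h' => h (ht h'), Set.inter_eq_left.2 ht⟩

theorem finite_of_subset_isCompact {s K : Set (Fan κ)} (hK : IsCompact K) (hsK : s ⊆ K)
    (h : apex ∉ s) (hs : ∀ α : κ, {n | pt α n ∈ s}.Finite) : s.Finite :=
  (hK.of_isClosed_subset (isClosed_of_finite_spokes hs) hsK).finite (isDiscrete_of_apex_notMem h)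

theorem finite_spokes_of_isCompact {K : Set (Fan κ)} (hK : IsCompact K) :
    {α | ∃ n, pt α n ∈ K}.Finite := by
  set S := {α | ∃ n, pt α n ∈ K}
  choose n hn using fun α : S => α.2
  set p : S → Fan κ := fun α => pt α (n α)
  have hp : p.Injective := fun α β h => Subtype.ext (pt_inj.1 h).1
  have hspoke (α : κ) : {m | pt α m ∈ Set.range p}.Subsingleton := by
    rintro m ⟨β, hβ⟩ m' ⟨β', hβ'⟩
    obtain ⟨rfl, rfl⟩ := pt_inj.1 hβ
    obtain ⟨hββ', rfl⟩ := pt_inj.1 hβ'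
    rw [Subtype.ext hββ']
  have hfin := finite_of_subset_isCompact hK (Set.range_subset_iff.2 hn)
    (fun ⟨α, hα⟩ => pt_ne_apex _ _ hα) fun α => (hspoke α).finite
  exact Set.finite_coe_iff.1 ((Set.finite_range_iff hp).1 hfin)

end Fan

theorem exists_unbounded_family_of_boundingNumber_le {ι : Type} (h : boundingNumber ≤ #ι) :
    ∃ f : ι → ℕ → ℕ, ∀ g : ℕ → ℕ, ∃ α, ∃ᶠ n in atTop, g n < f α n := by
  obtain ⟨F, hF, hunbdd⟩ : boundingNumber ∈ {c : Cardinal | ∃ F : Set (ℕ → ℕ), #F = c ∧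
      ¬ ∃ g : ℕ → ℕ, ∀ f ∈ F, ∀ᶠ n in atTop, f n ≤ g n} := by
    refine csInf_mem ⟨_, Set.univ, rfl, fun ⟨g, hg⟩ => ?_⟩
    obtain ⟨n, hn⟩ := (hg (g + 1) trivial).exists
    exact (Nat.lt_succ_self (g n)).not_ge hn
  obtain ⟨e⟩ := (Cardinal.le_def F ι).1 (hF ▸ h)
  refine ⟨Function.extend e Subtype.val 0, fun g => ?_⟩
  push Not at hunbdd
  obtain ⟨f, hfF, hf⟩ := hunbdd g
  refine ⟨e ⟨f, hfF⟩, ?_⟩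
  simpa [e.injective.extend_apply] using hf

def fanGraph {ι : Type*} (f : ι → ℕ → ℕ) : Set (Fan ℕ × Fan ι) :=
  Set.range fun p : ι × ℕ => (Fan.pt p.2 (f p.1 p.2), Fan.pt p.1 p.2)

section fanGraph

variable {ι : Type*} (f : ι → ℕ → ℕ)

theorem isOpen_fanGraph : IsOpen (fanGraph f) := by
  rw [fanGraph, ← Set.iUnion_singleton_eq_range]
  refine isOpen_iUnion fun p => ?_
  rw [← Set.singleton_prod_singleton]
  exact (Fan.isOpen_of_apex_notMem (Fan.pt_ne_apex _ _).symm).prod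
    (Fan.isOpen_of_apex_notMem (Fan.pt_ne_apex _ _).symm)

theorem finite_fanGraph_inter_of_isCompact {K : Set (Fan ℕ × Fan ι)} (hK : IsCompact K) :
    (fanGraph f ∩ K).Finite := by
  refine (((Fan.finite_spokes_of_isCompact (hK.image continuous_snd)).prod
    (Fan.finite_spokes_of_isCompact (hK.image continuous_fst))).image
      fun p : ι × ℕ => (Fan.pt p.2 (f p.1 p.2), Fan.pt p.1 p.2)).subset ?_
  -- the point indexed by `(α, m)` lies on spoke `m` of the first fan and spoke `α` of the second

  rintro _ ⟨⟨⟨α, m⟩, rfl⟩, hK⟩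
  exact ⟨(α, m), ⟨⟨m, _, hK, rfl⟩, ⟨f α m, _, hK, rfl⟩⟩, rfl⟩

theorem apex_mem_closure_fanGraph (hf : ∀ g : ℕ → ℕ, ∃ α, ∃ᶠ n in atTop, g n < f α n) :
    (Fan.apex, Fan.apex) ∈ closure (fanGraph f) := by
  refine mem_closure_iff_nhds.2 fun W hW => ?_
  obtain ⟨U, hU, V, hV, hUV⟩ := mem_nhds_prod_iff.1 hW
  choose φ hφ using fun m => eventually_atTop.1 (Fan.tendsto_pt_apex m hU)
  obtain ⟨α, hα⟩ := hf φ
  obtain ⟨m, hlt, hmV⟩ := (hα.and_eventually (Fan.tendsto_pt_apex α hV)).exists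
  exact ⟨_, hUV ⟨hφ m _ hlt.le, hmV⟩, (α, m), rfl⟩

theorem isClopen_preimage_fanGraph_of_isCompact {K : Set (Fan ℕ × Fan ι)} (hK : IsCompact K) :
    IsClopen ((↑) ⁻¹' fanGraph f : Set K) :=
  ⟨Subtype.preimage_coe_inter_self K (fanGraph f) ▸
      (finite_fanGraph_inter_of_isCompact f hK).isClosed.preimage continuous_subtype_val,
    (isOpen_fanGraph f).preimage continuous_subtype_val⟩

end fanGraph

/-- If `𝔟 ≤ ω₁` then the product `S_ω × S_{ω₁}` of sequential fans is not a `k_R`-space. -/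
theorem not_isKRSpace_fan_prod_of_b_le_aleph_one (ι : Type) (hι : #ι = aleph 1)
    (hb : boundingNumber ≤ aleph 1) :
    ¬ IsKRSpace (Fan ℕ × Fan ι) := by
  intro hKR
  obtain ⟨f, hf⟩ := exists_unbounded_family_of_boundingNumber_le (hb.trans hι.ge)
  have hclopen : IsClopen (fanGraph f) :=
    hKR.isClopen_of_forall_isCompact fun _ => isClopen_preimage_fanGraph_of_isCompact f
  obtain ⟨_, hp⟩ := hclopen.isClosed.closure_eq ▸ apex_mem_closure_fanGraph f hf
  exact Fan.pt_ne_apex _ _ (congrArg Prod.fst hp)
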